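/- arXiv:1512.09363 — 5 statements merged into one kernel-verified Lean document; each statement's English description precedes it below -/
import Mathlib

section
/- With a_i = a1(2 - alpha^{i-1}), b_i = b1*beta^{i-1}, 0 < alpha < beta < 1, a1, b1 > 0, and r(i,j) = (b_i - b_j)/(a_j - a_i), for all integers i < j we have r(i,j) < r(i,j+1); that is, for fixed i the sequence j ↦ r(i,j) is strictly increasing. -/
/-!
Write `i = m + 1` and `j = i + k`. Then `a j - a i = a1 α^m (1 - α^k)` and
`b i - b j = b1 β^m (1 - β^k)`, so `r(i, j)` is a positive constant times
`(1 - β^k) / (1 - α^k)`, and it suffices that this ratio increases with `k`.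
Dividing out `1 - α` and `1 - β` turns the cross-multiplied inequality into
`α^k ∑_{t<k} β^t < β^k ∑_{t<k} α^t`, which holds term by term because
`α^(k-t) < β^(k-t)`.
-/

open Finset

section OrderedSemiring

variable {K : Type*} [CommSemiring K] [PartialOrder K] [IsStrictOrderedRing K]

theorem pow_mul_pow_lt_pow_mul_pow {α β : K} (hα : 0 < α) (hαβ : α < β) {t k : ℕ}
    (htk : t < k) : α ^ k * β ^ t < β ^ k * α ^ t := by
  obtain ⟨s, rfl⟩ := Nat.exists_eq_add_of_lt htk
  have hpow : α ^ (s + 1) < β ^ (s + 1) := pow_lt_pow_left₀ hαβ hα.le s.succ_ne_zero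
  have hpos : 0 < α ^ t * β ^ t := by
    have hβ0 : 0 < β := hα.trans hαβ
    positivity
  calc α ^ (t + s + 1) * β ^ t = α ^ t * β ^ t * α ^ (s + 1) := by ring
    _ < α ^ t * β ^ t * β ^ (s + 1) := mul_lt_mul_of_pos_left hpow hpos
    _ = β ^ (t + s + 1) * α ^ t := by ring

theorem pow_mul_geom_sum_lt_pow_mul_geom_sum {α β : K} (hα : 0 < α) (hαβ : α < β) {k : ℕ}
    (hk : 0 < k) :
    α ^ k * ∑ t ∈ range k, β ^ t < β ^ k * ∑ t ∈ range k, α ^ t := by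
  rw [mul_sum, mul_sum]
  exact sum_lt_sum_of_nonempty (nonempty_range_iff.mpr hk.ne') fun t ht =>
    pow_mul_pow_lt_pow_mul_pow hα hαβ (mem_range.mp ht)

end OrderedSemiring

section OrderedField

variable {K : Type*} [Field K] [LinearOrder K] [IsStrictOrderedRing K]

theorem one_sub_pow_div_one_sub_pow_lt_succ {α β : K} (hα : 0 < α) (hαβ : α < β) (hβ : β < 1)
    {k : ℕ} (hk : 0 < k) :
    (1 - β ^ k) / (1 - α ^ k) < (1 - β ^ (k + 1)) / (1 - α ^ (k + 1)) := by
  have hα1 : α < 1 := hαβ.trans hβ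
  have hpos : ∀ n, n ≠ 0 → 0 < 1 - α ^ n := fun n hn =>
    sub_pos.mpr (pow_lt_one₀ hα.le hα1 hn)
  rw [div_lt_div_iff₀ (hpos k hk.ne') (hpos _ k.succ_ne_zero)]
  set A := ∑ t ∈ range k, α ^ t
  set B := ∑ t ∈ range k, β ^ t
  have hA : 1 - α ^ k = (1 - α) * A := (mul_neg_geom_sum α k).symm
  have hB : 1 - β ^ k = (1 - β) * B := (mul_neg_geom_sum β k).symm
  have hA' : 1 - α ^ (k + 1) = (1 - α) * (A + α ^ k) := by
    rw [← mul_neg_geom_sum, sum_range_succ]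
  have hB' : 1 - β ^ (k + 1) = (1 - β) * (B + β ^ k) := by
    rw [← mul_neg_geom_sum, sum_range_succ]
  have hscale : 0 < (1 - α) * (1 - β) := mul_pos (sub_pos.mpr hα1) (sub_pos.mpr hβ)
  have key := mul_lt_mul_of_pos_left (pow_mul_geom_sum_lt_pow_mul_geom_sum hα hαβ hk) hscale
  rw [hA, hB, hA', hB']
  linear_combination key

end OrderedField

theorem r_increasing_in_j (α β a1 b1 : ℝ)
    (hα : 0 < α) (hαβ : α < β) (hβ : β < 1) (ha1 : 0 < a1) (hb1 : 0 < b1)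
    (a b : ℕ → ℝ)
    (ha : ∀ i, a i = a1 * (2 - α ^ (i - 1)))
    (hb : ∀ i, b i = b1 * β ^ (i - 1))
    (i j : ℕ) (hi : 1 ≤ i) (hij : i < j) :
    (b i - b j) / (a j - a i) < (b i - b (j + 1)) / (a (j + 1) - a i) := by
  obtain ⟨m, rfl⟩ := Nat.exists_eq_add_of_le' hi
  obtain ⟨k, rfl⟩ := Nat.exists_eq_add_of_lt hij
  rw [add_assoc (m + 1) k 1]
  have hr : ∀ n, (b (m + 1) - b (m + 1 + n)) / (a (m + 1 + n) - a (m + 1)) =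
      b1 * β ^ m / (a1 * α ^ m) * ((1 - β ^ n) / (1 - α ^ n)) := fun n => by
    rw [ha, ha, hb, hb, ← mul_div_mul_comm]
    simp only [Nat.add_sub_cancel, Nat.add_right_comm m 1 n, pow_add]
    ring_nf
  have hconst : 0 < b1 * β ^ m / (a1 * α ^ m) := by
    have hβ0 : 0 < β := hα.trans hαβ
    positivity
  rw [hr, add_assoc (m + 1) (k + 1) 1, hr]
  exact mul_lt_mul_of_pos_left
    (one_sub_pow_div_one_sub_pow_lt_succ hα hαβ hβ k.succ_pos) hconst
end

section
/- With a_i = a1(2 - alpha^{i-1}), b_i = b1*beta^{i-1}, 0 < alpha < beta < 1, a1, b1 > 0, and r(i,j) = (b_i - b_j)/(a_j - a_i), for every integer i ≥ 2 and every j > i-1 we have r(i-1,j) < (b1/a1)(beta/alpha)^{i-2}; i.e., the limit of r(i-1,j) as j tends to infinity is (b1/a1)(beta/alpha)^{i-2} and it is approached from below. -/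
/-! With `p = i - 2` and `q = j - 1`, the quotient is `(b1 / a1) * (β^p - β^q) / (α^p - α^q)`.
Clearing the positive denominator, the bound `(β^p - β^q) / (α^p - α^q) < (β / α)^p` reduces to
`β^p α^(q-p) < β^q`, i.e. to `α^(q-p) < β^(q-p)`. -/

theorem pow_sub_pow_div_pow_sub_pow_lt {K : Type*} [Field K] [LinearOrder K] [IsStrictOrderedRing K]
    {α β : K} {p q : ℕ} (hα : 0 < α) (hαβ : α < β) (hα1 : α < 1) (hpq : p < q) :
    (β ^ p - β ^ q) / (α ^ p - α ^ q) < (β / α) ^ p := by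
  obtain ⟨k, rfl⟩ := Nat.exists_eq_add_of_lt hpq
  have hden : 0 < α ^ p - α ^ (p + k + 1) :=
    sub_pos.2 (pow_lt_pow_right_of_lt_one₀ hα hα1 hpq)
  have hgap : α ^ (k + 1) < β ^ (k + 1) := pow_lt_pow_left₀ hαβ hα.le k.succ_ne_zero
  rw [div_lt_iff₀ hden]
  calc β ^ p - β ^ (p + k + 1) = β ^ p - β ^ p * β ^ (k + 1) := by ring
    _ < β ^ p - β ^ p * α ^ (k + 1) := by gcongr; exact pow_pos (hα.trans hαβ) p
    _ = (β / α) ^ p * (α ^ p - α ^ (p + k + 1)) := by rw [div_pow]; field_simp; ring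

theorem r_below_limit (α β a1 b1 : ℝ)
    (hα : 0 < α) (hαβ : α < β) (hβ : β < 1) (ha1 : 0 < a1) (hb1 : 0 < b1)
    (a b : ℕ → ℝ)
    (ha : ∀ i, a i = a1 * (2 - α ^ (i - 1)))
    (hb : ∀ i, b i = b1 * β ^ (i - 1))
    (i j : ℕ) (hi : 2 ≤ i) (hij : i - 1 < j) :
    (b (i - 1) - b j) / (a j - a (i - 1)) < (b1 / a1) * (β / α) ^ (i - 2) := by
  have hidx : i - 1 - 1 = i - 2 := by omega
  have hquot : (b (i - 1) - b j) / (a j - a (i - 1))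
      = (b1 / a1) * ((β ^ (i - 2) - β ^ (j - 1)) / (α ^ (i - 2) - α ^ (j - 1))) := by
    rw [ha, ha, hb, hb, hidx, div_mul_div_comm]
    congr 1 <;> ring
  rw [hquot]
  exact mul_lt_mul_of_pos_left
    (pow_sub_pow_div_pow_sub_pow_lt hα hαβ (hαβ.trans hβ) (by omega)) (div_pos hb1 ha1)
end

section
/- With a_i = a1(2 - alpha^{i-1}), b_i = b1*beta^{i-1}, where 0 < alpha < beta < 1 - alpha < 1 and a1, b1 > 0, and r(i,j) = (b_i - b_j)/(a_j - a_i): for all integers i with 2 ≤ i and all k > i, we have r(i-1,k) < r(i,i+1). -/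
/-!
Both slopes factor through the common positive scale `b1 β^(i-2) / (a1 α^(i-2))`: writing
`s = k - i + 1`, the left one is that scale times `(1 - β^s) / (1 - α^s)`, which is `< 1`, and the
right one is that scale times `β (1 - β) / (α (1 - α))`, which is `> 1` because
`β (1 - β) - α (1 - α) = (β - α) (1 - α - β) > 0`.
-/

lemma chord_slope_eq (α β a1 b1 : ℝ) (p s : ℕ) :
    (b1 * β ^ p - b1 * β ^ (p + s)) / (a1 * (2 - α ^ (p + s)) - a1 * (2 - α ^ p)) =
      b1 * β ^ p / (a1 * α ^ p) * ((1 - β ^ s) / (1 - α ^ s)) := by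
  rw [div_mul_div_comm]
  ring

lemma one_sub_pow_div_one_sub_pow_lt_one {α β : ℝ} (hα : 0 ≤ α) (hαβ : α < β) (hβ : β ≤ 1)
    {s : ℕ} (hs : s ≠ 0) : (1 - β ^ s) / (1 - α ^ s) < 1 := by
  have hαs : α ^ s < 1 := pow_lt_one₀ hα (hαβ.trans_le hβ) hs
  rw [div_lt_one (by linarith)]
  linarith [pow_lt_pow_left₀ hαβ hα hs]

lemma one_lt_div_mul_one_sub_div {α β : ℝ} (hα : 0 < α) (hαβ : α < β) (hβ : β < 1 - α) :
    1 < β / α * ((1 - β) / (1 - α)) := by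
  rw [div_mul_div_comm, one_lt_div (by nlinarith)]
  nlinarith

theorem r_prev_lt_next (α β a1 b1 : ℝ)
    (hα : 0 < α) (hαβ : α < β) (hβ : β < 1 - α) (ha1 : 0 < a1) (hb1 : 0 < b1)
    (a b : ℕ → ℝ)
    (ha : ∀ i, a i = a1 * (2 - α ^ (i - 1)))
    (hb : ∀ i, b i = b1 * β ^ (i - 1))
    (i k : ℕ) (hi : 2 ≤ i) (hik : i < k) :
    (b (i - 1) - b k) / (a k - a (i - 1)) < (b i - b (i + 1)) / (a (i + 1) - a i) := by
  obtain ⟨p, rfl⟩ : ∃ p, i = p + 2 := ⟨i - 2, by omega⟩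
  obtain ⟨s, rfl⟩ : ∃ s, k = p + 1 + s := ⟨k - (p + 1), by omega⟩
  have hs : s ≠ 0 := by omega
  have hscale : 0 < b1 * β ^ p / (a1 * α ^ p) := by
    have := hα.trans hαβ
    positivity
  simp only [ha, hb, Nat.add_sub_cancel, show p + 2 - 1 = p + 1 by omega,
    show p + 2 + 1 - 1 = p + 1 + 1 by omega, show p + 1 + s - 1 = p + s by omega]
  calc (b1 * β ^ p - b1 * β ^ (p + s)) / (a1 * (2 - α ^ (p + s)) - a1 * (2 - α ^ p))
      = b1 * β ^ p / (a1 * α ^ p) * ((1 - β ^ s) / (1 - α ^ s)) := chord_slope_eq ..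
    _ < b1 * β ^ p / (a1 * α ^ p) * (β / α * ((1 - β ^ 1) / (1 - α ^ 1))) := by
      gcongr
      simp only [pow_one]
      exact (one_sub_pow_div_one_sub_pow_lt_one hα.le hαβ (by linarith) hs).trans
        (one_lt_div_mul_one_sub_div hα hαβ hβ)
    _ = b1 * β ^ (p + 1) / (a1 * α ^ (p + 1)) * ((1 - β ^ 1) / (1 - α ^ 1)) := by ring
    _ = _ := (chord_slope_eq ..).symm
end

section
/- With a_i = a1(2 - alpha^{i-1}), b_i = b1*beta^{i-1}, where 0 < alpha < beta < 1 - alpha < 1 and a1, b1 > 0, and r(i,j) = (b_i - b_j)/(a_j - a_i): for every k ≥ 2 and every i with 1 < i < k, max over 1 ≤ j < i of r(j,i) is strictly less than min over i < j ≤ k of r(i,j). -/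
/-!
Writing `j₁ = p + 1`, `i = p + m + 1`, `j₂ = p + m + n + 1`, the two slopes are
`(b1 β^p (1 - β^m)) / (a1 α^p (1 - α^m))` and `(b1 β^(p+m) (1 - β^n)) / (a1 α^(p+m) (1 - α^n))`.
Cross-multiplying, the claim becomes `α^m (1 - α^n) (1 - β^m) < β^m (1 - β^n) (1 - α^m)`.
Here `1 - β^m < 1 - α^m`, and `x ↦ x^m (1 - x^n)` is monotone along `α ≤ β` because
`x (1 - x)` is, which is where `α + β ≤ 1` enters.
-/

open Finset

lemma pow_mul_one_sub_pow_le {α β : ℝ} (hα : 0 ≤ α) (hαβ : α ≤ β) (hsum : α + β ≤ 1)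
    {m : ℕ} (hm : m ≠ 0) (n : ℕ) :
    α ^ m * (1 - α ^ n) ≤ β ^ m * (1 - β ^ n) := by
  obtain ⟨m, rfl⟩ := Nat.exists_eq_succ_of_ne_zero hm
  -- each factor of `x ^ m * (x * (1 - x)) * ∑ j < n, x ^ j` is nonnegative and monotone in `x`
  have factor (x : ℝ) :
      x ^ (m + 1) * (1 - x ^ n) = x ^ m * (x * (1 - x)) * ∑ j ∈ range n, x ^ j := by
    rw [← mul_neg_geom_sum]; ring
  have hβ : 0 ≤ β := hα.trans hαβ
  have hpar : α * (1 - α) ≤ β * (1 - β) := by nlinarith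
  have hpar₀ : 0 ≤ α * (1 - α) := mul_nonneg hα (by linarith)
  rw [factor, factor]
  exact mul_le_mul (mul_le_mul (pow_le_pow_left₀ hα hαβ m) hpar hpar₀ (pow_nonneg hβ m))
    (sum_le_sum fun j _ => pow_le_pow_left₀ hα hαβ j) (sum_nonneg fun j _ => pow_nonneg hα j)
    (mul_nonneg (pow_nonneg hβ m) (hpar₀.trans hpar))

lemma pow_mul_one_sub_pow_mul_lt {α β : ℝ} (hα : 0 < α) (hαβ : α < β) (hsum : α + β ≤ 1)
    {m n : ℕ} (hm : m ≠ 0) (hn : n ≠ 0) :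
    α ^ m * (1 - α ^ n) * (1 - β ^ m) < β ^ m * (1 - β ^ n) * (1 - α ^ m) := by
  have hβ1 : β < 1 := by linarith
  have hpos : 0 < α ^ m * (1 - α ^ n) :=
    mul_pos (pow_pos hα m) (sub_pos.2 (pow_lt_one₀ hα.le (by linarith) hn))
  have hle := pow_mul_one_sub_pow_le hα.le hαβ.le hsum hm n
  exact mul_lt_mul' hle (by gcongr) (sub_nonneg.2 (pow_le_one₀ (by linarith) hβ1.le))
    (hpos.trans_le hle)

lemma mul_pow_mul_one_sub_div_lt {α β a1 b1 : ℝ} (hα : 0 < α) (hαβ : α < β) (hsum : α + β ≤ 1)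
    (ha1 : 0 < a1) (hb1 : 0 < b1) (p : ℕ) {m n : ℕ} (hm : m ≠ 0) (hn : n ≠ 0) :
    b1 * β ^ p * (1 - β ^ m) / (a1 * α ^ p * (1 - α ^ m)) <
      b1 * β ^ (p + m) * (1 - β ^ n) / (a1 * α ^ (p + m) * (1 - α ^ n)) := by
  have hα1 : α < 1 := by linarith
  have hβ : 0 < β := hα.trans hαβ
  have hαm : 0 < 1 - α ^ m := sub_pos.2 (pow_lt_one₀ hα.le hα1 hm)
  have hαn : 0 < 1 - α ^ n := sub_pos.2 (pow_lt_one₀ hα.le hα1 hn)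
  have hC : 0 < a1 * b1 * α ^ p * β ^ p := by positivity
  rw [div_lt_div_iff₀ (by positivity) (by positivity)]
  calc b1 * β ^ p * (1 - β ^ m) * (a1 * α ^ (p + m) * (1 - α ^ n))
      = a1 * b1 * α ^ p * β ^ p * (α ^ m * (1 - α ^ n) * (1 - β ^ m)) := by ring
    _ < a1 * b1 * α ^ p * β ^ p * (β ^ m * (1 - β ^ n) * (1 - α ^ m)) :=
      mul_lt_mul_of_pos_left (pow_mul_one_sub_pow_mul_lt hα hαβ hsum hm hn) hC
    _ = b1 * β ^ (p + m) * (1 - β ^ n) * (a1 * α ^ p * (1 - α ^ m)) := by ring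

theorem max_lt_min_general (α β a1 b1 : ℝ)
    (hα : 0 < α) (hαβ : α < β) (hβ : β < 1 - α) (ha1 : 0 < a1) (hb1 : 0 < b1)
    (a b : ℕ → ℝ)
    (ha : ∀ i, a i = a1 * (2 - α ^ (i - 1)))
    (hb : ∀ i, b i = b1 * β ^ (i - 1))
    (k i : ℕ) :
    ∀ j₁, 1 ≤ j₁ → j₁ < i → ∀ j₂, i < j₂ → j₂ ≤ k →
      (b j₁ - b i) / (a i - a j₁) < (b i - b j₂) / (a j₂ - a i) := by
  intro j₁ hj₁ hj₁i j₂ hij₂ _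
  have ha_sub (s t : ℕ) : a (s + t + 1) - a (s + 1) = a1 * α ^ s * (1 - α ^ t) := by
    simp only [ha, Nat.add_sub_cancel, pow_add]; ring
  have hb_sub (s t : ℕ) : b (s + 1) - b (s + t + 1) = b1 * β ^ s * (1 - β ^ t) := by
    simp only [hb, Nat.add_sub_cancel, pow_add]; ring
  obtain ⟨p, rfl⟩ : ∃ p, j₁ = p + 1 := ⟨j₁ - 1, by omega⟩
  obtain ⟨m, rfl⟩ : ∃ m, i = p + m + 1 := ⟨i - (p + 1), by omega⟩
  obtain ⟨n, rfl⟩ : ∃ n, j₂ = p + m + n + 1 := ⟨j₂ - (p + m + 1), by omega⟩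
  rw [ha_sub, hb_sub, ha_sub, hb_sub]
  exact mul_pow_mul_one_sub_div_lt hα hαβ (by linarith) ha1 hb1 p (by omega) (by omega)

theorem max_lt_min (α β a1 b1 : ℝ)
    (hα : 0 < α) (hαβ : α < β) (hβ : β < 1 - α) (ha1 : 0 < a1) (hb1 : 0 < b1)
    (a b : ℕ → ℝ)
    (ha : ∀ i, a i = a1 * (2 - α ^ (i - 1)))
    (hb : ∀ i, b i = b1 * β ^ (i - 1))
    (k i : ℕ) (hk : 2 ≤ k) (hi1 : 1 < i) (hik : i < k) :
    ∀ j₁, 1 ≤ j₁ → j₁ < i → ∀ j₂, i < j₂ → j₂ ≤ k →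
      (b j₁ - b i) / (a i - a j₁) < (b i - b j₂) / (a j₂ - a i) :=
  max_lt_min_general α β a1 b1 hα hαβ hβ ha1 hb1 a b ha hb k i
end

section
/- The four-term polynomial f(x,y) = x^{485} y + x^{477} y^4 + x^{459} y^8 + x^{243} y^{32} is irreducible: for each i, the i-th term is not O of the sum of the other three. Witnesses: along x = y^{0.7}, x = y^{0.31}, x = y^{0.21}, and x = y^{0.05} respectively, the corresponding term strictly dominates the others asymptotically. -/
/-!
Along the curve `x = t ^ p`, `y = t ^ q` the monomial `x ^ a * y ^ b` becomes `t ^ (a * p + b * q)`.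
If one term's exponent strictly exceeds those of the other three, then for large `t` it beats any
constant multiple of their sum, so it is not `O` of that sum. The curves `(p, q) = (7, 10)`,
`(31, 100)`, `(21, 100)`, `(1, 20)`, i.e. `x = y ^ z` with `z = 0.7, 0.31, 0.21, 0.05`, single out
the four terms in turn.
-/

/-- Two-variable big-oh: `f = O(g)` over nonnegative reals with
`x ≥ x0` or `y ≥ y0`. -/
def BigO2 (f g : ℝ → ℝ → ℝ) : Prop :=
  ∃ c x0 y0 : ℝ, 0 < c ∧ 0 < x0 ∧ 0 < y0 ∧
    ∀ x y : ℝ, 0 ≤ x → 0 ≤ y → (x0 ≤ x ∨ y0 ≤ y) → f x y ≤ c * g x y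

lemma mul_add_three_pow_lt_pow {c t : ℝ} {N M₁ M₂ M₃ : ℕ} (hc : 0 ≤ c) (ht : 3 * c < t)
    (ht₁ : 1 ≤ t) (h₁ : M₁ < N) (h₂ : M₂ < N) (h₃ : M₃ < N) :
    c * (t ^ M₁ + t ^ M₂ + t ^ M₃) < t ^ N := by
  have le_pred {M : ℕ} (h : M < N) : t ^ M ≤ t ^ (N - 1) :=
    pow_le_pow_right₀ ht₁ (Nat.le_sub_one_of_lt h)
  have hpos : 0 < t ^ (N - 1) := pow_pos (by linarith) _
  calc c * (t ^ M₁ + t ^ M₂ + t ^ M₃) ≤ c * (3 * t ^ (N - 1)) := by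
        gcongr; linarith [le_pred h₁, le_pred h₂, le_pred h₃]
    _ = 3 * c * t ^ (N - 1) := by ring
    _ < t * t ^ (N - 1) := by gcongr
    _ = t ^ N := mul_pow_sub_one (by omega) t

lemma not_bigO2_monomial_of_dominant_on_curve {a b a₁ b₁ a₂ b₂ a₃ b₃ : ℕ} (p q : ℕ)
    (hp : p ≠ 0) (h₁ : a₁ * p + b₁ * q < a * p + b * q) (h₂ : a₂ * p + b₂ * q < a * p + b * q)
    (h₃ : a₃ * p + b₃ * q < a * p + b * q) :
    ¬ BigO2 (fun x y => x ^ a * y ^ b)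
      (fun x y => x ^ a₁ * y ^ b₁ + x ^ a₂ * y ^ b₂ + x ^ a₃ * y ^ b₃) := by
  rintro ⟨c, x0, _, hc, -, -, hbound⟩
  set t := max x0 (3 * c + 1)
  have ht₁ : 1 ≤ t := le_max_of_le_right (by linarith)
  have hx0 : x0 ≤ t ^ p := (le_max_left _ _).trans (le_self_pow₀ ht₁ hp)
  have on_curve (m n : ℕ) : (t ^ p) ^ m * (t ^ q) ^ n = t ^ (m * p + n * q) := by
    rw [← pow_mul, ← pow_mul, ← pow_add, mul_comm p, mul_comm q]
  have h := hbound (t ^ p) (t ^ q) (by positivity) (by positivity) (Or.inl hx0)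
  simp only [on_curve] at h
  exact h.not_gt (mul_add_three_pow_lt_pow hc.le (by linarith [le_max_right x0 (3 * c + 1)])
    ht₁ h₁ h₂ h₃)

theorem four_term_irreducible :
    ¬ BigO2 (fun x y => x ^ 485 * y)
      (fun x y => x ^ 477 * y ^ 4 + x ^ 459 * y ^ 8 + x ^ 243 * y ^ 32) ∧
    ¬ BigO2 (fun x y => x ^ 477 * y ^ 4)
      (fun x y => x ^ 485 * y + x ^ 459 * y ^ 8 + x ^ 243 * y ^ 32) ∧
    ¬ BigO2 (fun x y => x ^ 459 * y ^ 8)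
      (fun x y => x ^ 485 * y + x ^ 477 * y ^ 4 + x ^ 243 * y ^ 32) ∧
    ¬ BigO2 (fun x y => x ^ 243 * y ^ 32)
      (fun x y => x ^ 485 * y + x ^ 477 * y ^ 4 + x ^ 459 * y ^ 8) := by
  refine ⟨?_, ?_, ?_, ?_⟩
  · simpa only [pow_one] using
      not_bigO2_monomial_of_dominant_on_curve (b := 1) 7 10 (by norm_num) (by norm_num)
        (by norm_num) (by norm_num)
  · simpa only [pow_one] using
      not_bigO2_monomial_of_dominant_on_curve (b₁ := 1) 31 100 (by norm_num) (by norm_num)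
        (by norm_num) (by norm_num)
  · simpa only [pow_one] using
      not_bigO2_monomial_of_dominant_on_curve (b₁ := 1) 21 100 (by norm_num) (by norm_num)
        (by norm_num) (by norm_num)
  · simpa only [pow_one] using
      not_bigO2_monomial_of_dominant_on_curve (b₁ := 1) 1 20 (by norm_num) (by norm_num)
        (by norm_num) (by norm_num)
end
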